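/- Let J = {1,…,n−1} and let 𝒥 be the set of (n−1)-element subsets of V. Let E ∈ B_V and suppose there is k > 0 such that for every F′ ∈ B⁰_V and every I ∈ 𝒥, ν^J(π_J(F′ ∩ E)) ≤ k·ν^I(π_I(F′ ∩ E)). Suppose F ⊆ E is of the form F = E ∩ ⋂_{i<ω} F_i with each F_i ∈ B⁰_V, and let I ∈ 𝒥 with I ≠ J. Then: (2) for every C ∈ B⁰_I, ν^J(π_J(F ∖ π_I⁻¹(C))) ≥ ν^J(π_J(F)) − k·ν^I(C ∩ π_I(F)); and (3) for every B ∈ B⁰_I, ν^J(π_J(F ∩ π_I⁻¹(B))) ≥ ν^J(π_J(F)) − k·ν^I(π_I(F) ∖ B). -/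

import Mathlib

open FirstOrder MeasureTheory Set
open scoped ENNReal

namespace MeasureAmalgamation

variable (L : FirstOrder.Language) (M : Type*) [L.Structure M]

/-- `𝓜` is ℵ₁-saturated: every countable finitely satisfiable set of `L`-formulas in one
free variable with parameters from `M` is realized in `M`. -/
def Aleph1Saturated : Prop :=
  ∀ S : Set (L.Formula (M ⊕ Fin 1)), S.Countable →
    (∀ T : Finset (L.Formula (M ⊕ Fin 1)), ↑T ⊆ S →
      ∃ a : M, ∀ φ ∈ T, φ.Realize (Sum.elim id fun _ => a)) →
    ∃ a : M, ∀ φ ∈ S, φ.Realize (Sum.elim id fun _ => a)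

/-- The σ-algebra `B_α` generated by the Boolean algebra `B⁰_α` of parameter-definable
subsets of `M^α`. -/
def defSigma (α : Type*) : MeasurableSpace (α → M) :=
  MeasurableSpace.generateFrom {s : Set (α → M) | (Set.univ : Set M).Definable L s}

variable (n : ℕ)

/-- The projection `π_I : M^V → M^I`. -/
def proj (I : Finset (Fin n)) (x : Fin n → M) : ↥I → M := fun i => x ↑i

/-- The Boolean algebra `B⁰_{V,I}` generated by preimages under `π_I` of sets in `B⁰_I`. -/
def cylDef (I : Finset (Fin n)) : Set (Set (Fin n → M)) :=
  {s | ∃ t : Set (↥I → M), (Set.univ : Set M).Definable L t ∧ s = proj M n I ⁻¹' t}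

/-- The σ-algebra `B_{V,I}` generated by `B⁰_{V,I}`. -/
def cylSigma (I : Finset (Fin n)) : MeasurableSpace (Fin n → M) :=
  MeasurableSpace.generateFrom (cylDef L M n I)

/-- The push-forward measure `ν^I` of `ν = ν^V` under `π_I`. -/
noncomputable def nuI (ν : @Measure (Fin n → M) (defSigma L M (Fin n)))
    (I : Finset (Fin n)) : @Measure (↥I → M) (defSigma L M ↥I) :=
  @Measure.map _ _ (defSigma L M (Fin n)) (defSigma L M ↥I) (proj M n I) ν

/-- Combining a `W`-tuple and a `(V ∖ W)`-tuple into a `V`-tuple. -/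
def glue (W : Finset (Fin n)) (x : ↥W → M) (y : ↥(Wᶜ) → M) : Fin n → M :=
  fun i => if h : i ∈ W then x ⟨i, h⟩ else y ⟨i, Finset.mem_compl.mpr h⟩

/-- The Definability condition: for all `W ⊆ V` and `B ∈ B_V`, the function
`x_W ↦ ν^{V∖W}(B(x_W))` is `B_W`-measurable. -/
def DefinabilityCond (ν : @Measure (Fin n → M) (defSigma L M (Fin n))) : Prop :=
  ∀ (W : Finset (Fin n)) (B : Set (Fin n → M)),
    MeasurableSet[defSigma L M (Fin n)] B →
    @Measurable _ _ (defSigma L M ↥W) _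
      (fun x : ↥W → M => nuI L M n ν Wᶜ {y : ↥(Wᶜ) → M | glue M n W x y ∈ B})

/-- The Fubini condition: for all `W ⊆ V` and essentially bounded `B_V`-measurable
`f : M^V → ℝ`, `∫ f dν^V = ∫∫ f dν^W dν^{V∖W}`. -/
def FubiniCond (ν : @Measure (Fin n → M) (defSigma L M (Fin n))) : Prop :=
  ∀ (W : Finset (Fin n)) (f : (Fin n → M) → ℝ),
    @Measurable _ _ (defSigma L M (Fin n)) _ f →
    (∃ C : ℝ, ∀ᵐ x ∂ν, |f x| ≤ C) →
    ∫ x, f x ∂ν =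
      ∫ y, (∫ x, f (glue M n W x y) ∂(nuI L M n ν W)) ∂(nuI L M n ν Wᶜ)

/-- The index set `J = {1,…,n−1}`, i.e. all indices except the last one. -/
def Jset (n : ℕ) (hn : 2 ≤ n) : Finset (Fin n) := {(⟨n - 1, by omega⟩ : Fin n)}ᶜ

/-!
The hypothesis on `κ` only bounds the projections of the sets `F' ∩ E` with `F'` definable. It
extends to every `S ⊆ E` by outer approximation: cover `π_I(S)` by countably many definable sets
whose union has almost the measure of `π_I(S)`; the finite unions of the cover are definable, and
their preimages cut `S` into an increasing sequence to which the hypothesis applies. Parts (2) and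
(3) follow by splitting `F` along `π_I⁻¹(C)` and applying the extended bound to the piece inside.
-/

section OuterApproximation

variable {X : Type*} {𝒜 : Set (Set X)} {mX : MeasurableSpace X}

/-- Uniqueness of the Carathéodory extension from an algebra of sets. -/
theorem _root_.MeasureTheory.IsSetAlgebra.inducedOuterMeasure_eq_measure
    (h𝒜 : IsSetAlgebra 𝒜) (hgen : mX = MeasurableSpace.generateFrom 𝒜)
    (μ : Measure X) [IsFiniteMeasure μ] {s : Set X} (hs : MeasurableSet s) :
    inducedOuterMeasure (fun t (_ : t ∈ 𝒜) => μ t) h𝒜.empty_mem measure_empty s = μ s := by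
  set μ₀ := inducedOuterMeasure (fun t (_ : t ∈ 𝒜) => μ t) h𝒜.empty_mem measure_empty
  have hcar : mX ≤ μ₀.caratheodory := by
    rw [hgen, MeasurableSpace.generateFrom_le_iff]
    intro A hA
    refine OuterMeasure.ofFunction_caratheodory fun t => ?_
    by_cases ht : t ∈ 𝒜
    · have hA' : MeasurableSet A := hgen ▸ MeasurableSpace.measurableSet_generateFrom hA
      rw [extend_eq _ ht, extend_eq _ (h𝒜.inter_mem ht hA), extend_eq _ (h𝒜.sdiff_mem ht hA),
        measure_inter_add_sdiff t hA']
    · rw [extend_eq_top _ ht]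
      exact le_top
  have hμ_le : μ.toOuterMeasure ≤ μ₀ := le_inducedOuterMeasure.mpr fun _ _ => le_rfl
  have hagree : ∀ A ∈ 𝒜, μ A = μ₀.toMeasure hcar A := fun A hA => by
    rw [toMeasure_apply _ _ (hgen ▸ MeasurableSpace.measurableSet_generateFrom hA)]
    exact le_antisymm (hμ_le A) ((OuterMeasure.ofFunction_le A).trans (extend_eq _ hA).le)
  have hext : μ = μ₀.toMeasure hcar :=
    ext_of_generate_finite 𝒜 hgen h𝒜.isSetRing.isSetSemiring.isPiSystem hagree
      (hagree _ h𝒜.univ_mem)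
  rw [hext, toMeasure_apply _ _ hs]

theorem _root_.MeasureTheory.IsSetAlgebra.exists_iUnion_superset_measure_le
    (h𝒜 : IsSetAlgebra 𝒜) (hgen : mX = MeasurableSpace.generateFrom 𝒜)
    (μ : Measure X) [IsFiniteMeasure μ] (s : Set X) {ε : ℝ≥0∞} (hε : ε ≠ 0) :
    ∃ t : ℕ → Set X, (∀ i, t i ∈ 𝒜) ∧ s ⊆ ⋃ i, t i ∧ μ (⋃ i, t i) ≤ μ s + ε := by
  have hlt : inducedOuterMeasure (fun t (_ : t ∈ 𝒜) => μ t) h𝒜.empty_mem measure_empty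
      (toMeasurable μ s) < μ s + ε := by
    rw [h𝒜.inducedOuterMeasure_eq_measure hgen μ (measurableSet_toMeasurable μ s),
      measure_toMeasurable]
    exact ENNReal.lt_add_right (measure_ne_top μ s) hε
  rw [inducedOuterMeasure, OuterMeasure.ofFunction_eq_iInf_mem _ _ (P := (· ∈ 𝒜))
    (fun _ h => extend_eq_top _ h)] at hlt
  simp only [iInf_lt_iff] at hlt
  obtain ⟨t, ht𝒜, hcover, hsum⟩ := hlt
  refine ⟨t, ht𝒜, (subset_toMeasurable μ s).trans hcover, ?_⟩
  calc μ (⋃ i, t i) ≤ ∑' i, μ (t i) := measure_iUnion_le t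
    _ = ∑' i, extend (fun t (_ : t ∈ 𝒜) => μ t) (t i) :=
        tsum_congr fun i => (extend_eq (fun t (_ : t ∈ 𝒜) => μ t) (ht𝒜 i)).symm
    _ ≤ μ s + ε := hsum.le

end OuterApproximation

section Projections

variable {X Y Z : Type*} {mX : MeasurableSpace X} {mZ : MeasurableSpace Z}

theorem _root_.MeasureTheory.measure_image_le_mul_measure_image
    (μ : Measure X) [IsFiniteMeasure μ] (ρ : Measure Z)
    {𝒜 : Set (Set X)} (h𝒜 : IsSetAlgebra 𝒜) (hgen : mX = MeasurableSpace.generateFrom 𝒜)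
    {p : Y → X} {q : Y → Z} {E : Set Y} {κ : NNReal}
    (h : ∀ A ∈ 𝒜, ρ (q '' (p ⁻¹' A ∩ E)) ≤ κ * μ A) {S : Set Y} (hS : S ⊆ E) :
    ρ (q '' S) ≤ κ * μ (p '' S) := by
  refine ENNReal.le_of_forall_pos_le_add fun δ hδ _ => ?_
  obtain ⟨t, ht𝒜, hcover, ht⟩ := h𝒜.exists_iUnion_superset_measure_le hgen μ (p '' S)
    (ε := δ / κ) (by simp [hδ.ne'])
  have hunion : q '' S = ⋃ k, q '' (S ∩ p ⁻¹' accumulate t k) := by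
    rw [← image_iUnion, ← inter_iUnion, ← preimage_iUnion, iUnion_accumulate,
      inter_eq_left.mpr (image_subset_iff.mp hcover)]
  have hmono : Monotone fun k => q '' (S ∩ p ⁻¹' accumulate t k) := fun _ _ hkl =>
    image_mono (inter_subset_inter_right _ (preimage_mono (monotone_accumulate hkl)))
  rw [hunion, hmono.measure_iUnion]
  refine iSup_le fun k => ?_
  calc ρ (q '' (S ∩ p ⁻¹' accumulate t k))
      ≤ ρ (q '' (p ⁻¹' accumulate t k ∩ E)) :=
        measure_mono (image_mono fun y hy => ⟨hy.2, hS hy.1⟩)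
    _ ≤ κ * μ (accumulate t k) := h _ (h𝒜.isSetRing.accumulate_mem ht𝒜 k)
    _ ≤ κ * μ (⋃ i, t i) := by gcongr; exact accumulate_subset_iUnion k
    _ ≤ κ * (μ (p '' S) + δ / κ) := by gcongr
    _ ≤ κ * μ (p '' S) + δ := by rw [mul_add]; gcongr; exact ENNReal.mul_div_le

theorem _root_.MeasureTheory.measure_image_sub_le_measure_image_diff
    (μ : Measure X) (ρ : Measure Z) {p : Y → X} {q : Y → Z} {κ : ℝ≥0∞} {S : Set Y}
    (C : Set X) (h : ρ (q '' (S ∩ p ⁻¹' C)) ≤ κ * μ (p '' (S ∩ p ⁻¹' C))) :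
    ρ (q '' S) - κ * μ (C ∩ p '' S) ≤ ρ (q '' (S \ p ⁻¹' C)) := by
  rw [tsub_le_iff_right]
  calc ρ (q '' S) = ρ (q '' (S \ p ⁻¹' C) ∪ q '' (S ∩ p ⁻¹' C)) := by
        rw [← image_union, sdiff_union_inter]
    _ ≤ ρ (q '' (S \ p ⁻¹' C)) + ρ (q '' (S ∩ p ⁻¹' C)) := measure_union_le _ _
    _ ≤ ρ (q '' (S \ p ⁻¹' C)) + κ * μ (p '' (S ∩ p ⁻¹' C)) := by gcongr
    _ = ρ (q '' (S \ p ⁻¹' C)) + κ * μ (C ∩ p '' S) := by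
        rw [image_inter_preimage, inter_comm (p '' S)]

end Projections

theorem isSetAlgebra_setOf_definable (α : Type*) :
    IsSetAlgebra {s : Set (α → M) | (Set.univ : Set M).Definable L s} where
  empty_mem := Set.definable_empty
  compl_mem _ hs := hs.compl
  union_mem _ _ hs ht := hs.union ht

theorem lemma_intersection_parts_general
    (L : FirstOrder.Language) (M : Type*) [L.Structure M]
    (n : ℕ) (hn : 2 ≤ n)
    (ν : @Measure (Fin n → M) (defSigma L M (Fin n)))
    (hprob : ν Set.univ = 1)
    (E : Set (Fin n → M))
    (κ : NNReal)
    (hc : ∀ F' : Set (Fin n → M), (Set.univ : Set M).Definable L F' →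
      ∀ I : Finset (Fin n), I.card = n - 1 →
        nuI L M n ν (Jset n hn) (proj M n (Jset n hn) '' (F' ∩ E)) ≤
          (κ : ℝ≥0∞) * nuI L M n ν I (proj M n I '' (F' ∩ E)))
    (Fseq : ℕ → Set (Fin n → M))
    (F : Set (Fin n → M)) (hF : F = E ∩ ⋂ i : ℕ, Fseq i)
    (I : Finset (Fin n)) (hI : I.card = n - 1) :
    (∀ C : Set (↥I → M), (Set.univ : Set M).Definable L C →
      nuI L M n ν (Jset n hn) (proj M n (Jset n hn) '' (F \ proj M n I ⁻¹' C)) ≥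
        nuI L M n ν (Jset n hn) (proj M n (Jset n hn) '' F) -
          (κ : ℝ≥0∞) * nuI L M n ν I (C ∩ proj M n I '' F)) ∧
    (∀ B : Set (↥I → M), (Set.univ : Set M).Definable L B →
      nuI L M n ν (Jset n hn) (proj M n (Jset n hn) '' (F ∩ proj M n I ⁻¹' B)) ≥
        nuI L M n ν (Jset n hn) (proj M n (Jset n hn) '' F) -
          (κ : ℝ≥0∞) * nuI L M n ν I (proj M n I '' F \ B)) := by
  have : IsFiniteMeasure ν := ⟨by simp [hprob]⟩
  have : IsFiniteMeasure (nuI L M n ν I) :=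
    Measure.isFiniteMeasure_map (mβ := defSigma L M ↥I) ν _
  have hFE : F ⊆ E := hF ▸ inter_subset_left
  have hbound (A : Set (↥I → M)) (hA : (Set.univ : Set M).Definable L A) :=
    (hc (proj M n I ⁻¹' A) (hA.preimage_comp _) I hI).trans
      (mul_le_mul_right (measure_mono (image_subset_iff.mpr inter_subset_left)) _)
  have hsplit (C : Set (↥I → M)) := measure_image_sub_le_measure_image_diff _ _ C
    (measure_image_le_mul_measure_image (nuI L M n ν I) _
      (isSetAlgebra_setOf_definable L M ↥I) rfl hbound (inter_subset_left.trans hFE))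
  refine ⟨fun C _ => hsplit C, fun B _ => ?_⟩
  simpa only [ge_iff_le, preimage_compl, Set.sdiff_compl, inter_comm _ (proj M n I '' F),
    ← Set.sdiff_eq] using hsplit Bᶜ

/-- **Lemma 2.5(2),(3)**: if `E ∈ B_V` satisfies condition (c), `F ⊆ E` is a countable
intersection of sets in `B⁰_V` with `E`, and `I ≠ J` is an `(n−1)`-subset of `V`, then
(2) for `C ∈ B⁰_I`, `ν^J(π_J(F ∖ π_I⁻¹(C))) ≥ ν^J(π_J(F)) − k·ν^I(C ∩ π_I(F))`, and
(3) for `B ∈ B⁰_I`, `ν^J(π_J(F ∩ π_I⁻¹(B))) ≥ ν^J(π_J(F)) − k·ν^I(π_I(F) ∖ B)`. -/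
theorem lemma_intersection_parts
    (L : FirstOrder.Language) (M : Type*) [L.Structure M]
    [Countable (Σ l, L.Functions l)] [Countable (Σ l, L.Relations l)]
    (hsat : Aleph1Saturated L M)
    (n : ℕ) (hn : 2 ≤ n)
    (ν : @Measure (Fin n → M) (defSigma L M (Fin n)))
    (hprob : ν Set.univ = 1)
    (hdef : DefinabilityCond L M n ν)
    (hfub : FubiniCond L M n ν)
    (E : Set (Fin n → M))
    (hE : MeasurableSet[defSigma L M (Fin n)] E)
    (κ : NNReal) (hκ : 0 < κ)
    (hc : ∀ F' : Set (Fin n → M), (Set.univ : Set M).Definable L F' →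
      ∀ I : Finset (Fin n), I.card = n - 1 →
        nuI L M n ν (Jset n hn) (proj M n (Jset n hn) '' (F' ∩ E)) ≤
          (κ : ℝ≥0∞) * nuI L M n ν I (proj M n I '' (F' ∩ E)))
    (Fseq : ℕ → Set (Fin n → M))
    (hFseq : ∀ i : ℕ, (Set.univ : Set M).Definable L (Fseq i))
    (F : Set (Fin n → M)) (hF : F = E ∩ ⋂ i : ℕ, Fseq i)
    (I : Finset (Fin n)) (hI : I.card = n - 1) (hIJ : I ≠ Jset n hn) :
    (∀ C : Set (↥I → M), (Set.univ : Set M).Definable L C →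
      nuI L M n ν (Jset n hn) (proj M n (Jset n hn) '' (F \ proj M n I ⁻¹' C)) ≥
        nuI L M n ν (Jset n hn) (proj M n (Jset n hn) '' F) -
          (κ : ℝ≥0∞) * nuI L M n ν I (C ∩ proj M n I '' F)) ∧
    (∀ B : Set (↥I → M), (Set.univ : Set M).Definable L B →
      nuI L M n ν (Jset n hn) (proj M n (Jset n hn) '' (F ∩ proj M n I ⁻¹' B)) ≥
        nuI L M n ν (Jset n hn) (proj M n (Jset n hn) '' F) -
          (κ : ℝ≥0∞) * nuI L M n ν I (proj M n I '' F \ B)) :=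
  lemma_intersection_parts_general L M n hn ν hprob E κ hc Fseq F hF I hI

end MeasureAmalgamation
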